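/- arXiv:2212.09119 — 2 statements merged into one kernel-verified Lean document; each statement's English description precedes it below -/
import Mathlib

section
/- Let Δ be an indecomposable (irreducible) root system in a finite-dimensional real inner product space E, and let X, H ∈ E be nonzero vectors. Define C_X = {α ∈ Δ | ⟨α, X⟩ = 0} and C_H = {α ∈ Δ | ⟨α, H⟩ = 0}. Then Δ ≠ C_X ∪ C_H; equivalently, there exists a root α ∈ Δ with ⟨α, X⟩ ≠ 0 and ⟨α, H⟩ ≠ 0. -/
open InnerProductSpace

/-- A (not necessarily reduced) root system in a real inner product space:
a finite set of nonzero vectors spanning the space, closed under the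
reflections it defines, with integrality of the Cartan numbers. -/
structure IsRootSystem {E : Type*} [NormedAddCommGroup E] [InnerProductSpace ℝ E]
    (Δ : Finset E) : Prop where
  ne_zero : ∀ α ∈ Δ, α ≠ 0
  spans : Submodule.span ℝ (Δ : Set E) = ⊤
  reflect_mem : ∀ α ∈ Δ, ∀ β ∈ Δ, β - (2 * ⟪β, α⟫_ℝ / ⟪α, α⟫_ℝ) • α ∈ Δ
  integral : ∀ α ∈ Δ, ∀ β ∈ Δ, ∃ n : ℤ, 2 * ⟪β, α⟫_ℝ / ⟪α, α⟫_ℝ = (n : ℝ)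

/-- A root system is indecomposable if it cannot be written as the union of two
nonempty mutually orthogonal subsets. -/
def IsIndecomposable {E : Type*} [NormedAddCommGroup E] [InnerProductSpace ℝ E]
    (Δ : Finset E) : Prop :=
  ¬ ∃ S T : Finset E, S.Nonempty ∧ T.Nonempty ∧ (Δ : Set E) = (S : Set E) ∪ (T : Set E) ∧
      ∀ α ∈ S, ∀ β ∈ T, ⟪α, β⟫_ℝ = 0

/-- If a vector `w` is orthogonal to every element of `s`, it is orthogonal to the span. -/
lemma inner_right_eq_zero_of_span {E : Type*} [NormedAddCommGroup E] [InnerProductSpace ℝ E]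
    (s : Set E) (w : E) (h : ∀ x ∈ s, ⟪x, w⟫_ℝ = 0) :
    ∀ v ∈ Submodule.span ℝ s, ⟪v, w⟫_ℝ = 0 := by
  intro v hv
  induction hv using Submodule.span_induction with
  | mem x hx => exact h x hx
  | zero => simp
  | add x y _ _ hx hy => simp [inner_add_left, hx, hy]
  | smul c x _ hx => simp [inner_smul_left, hx]

theorem roots_not_all_orthogonal_to_X_or_H
    {E : Type*} [NormedAddCommGroup E] [InnerProductSpace ℝ E] [FiniteDimensional ℝ E]
    (Δ : Finset E) (hrs : IsRootSystem Δ) (hind : IsIndecomposable Δ)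
    (X H : E) (hX : X ≠ 0) (hH : H ≠ 0) :
    (Δ : Set E) ≠ {α ∈ (Δ : Set E) | ⟪α, X⟫_ℝ = 0} ∪ {α ∈ (Δ : Set E) | ⟪α, H⟫_ℝ = 0} ∧
    ∃ α ∈ Δ, ⟪α, X⟫_ℝ ≠ 0 ∧ ⟪α, H⟫_ℝ ≠ 0 := by
  classical
  -- A vector orthogonal to every root is zero.
  have zero_of_orth : ∀ v : E, (∀ α ∈ Δ, ⟪α, v⟫_ℝ = 0) → v = 0 := by
    intro v hv
    have hvmem : v ∈ Submodule.span ℝ (Δ : Set E) := by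
      rw [hrs.spans]; exact Submodule.mem_top
    have := inner_right_eq_zero_of_span (Δ : Set E) v (fun x hx => hv x hx) v hvmem
    exact inner_self_eq_zero.mp this
  have key : ∃ α ∈ Δ, ⟪α, X⟫_ℝ ≠ 0 ∧ ⟪α, H⟫_ℝ ≠ 0 := by
    by_contra hcon
    push_neg at hcon
    -- hcon : ∀ α ∈ Δ, ⟪α, X⟫ ≠ 0 → ⟪α, H⟫ = 0
    set B : Finset E := Δ.filter (fun β => ⟪β, H⟫_ℝ ≠ 0) with hBdef
    have hBmem : ∀ β, β ∈ B ↔ β ∈ Δ ∧ ⟪β, H⟫_ℝ ≠ 0 := by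
      intro β; simp [hBdef]
    -- every β ∈ B is orthogonal to X
    have hBX : ∀ β ∈ B, ⟪β, X⟫_ℝ = 0 := by
      intro β hβ
      rcases (hBmem β).1 hβ with ⟨hβΔ, hβH⟩
      by_contra hne
      exact hβH (hcon β hβΔ hne)
    have hBne : B.Nonempty := by
      by_contra hBe
      rw [Finset.not_nonempty_iff_eq_empty] at hBe
      apply hH
      apply zero_of_orth
      intro α hα
      by_contra hne
      have : α ∈ B := (hBmem α).2 ⟨hα, hne⟩
      simp [hBe] at this
    set U : Submodule ℝ E := Submodule.span ℝ (B : Set E) with hUdef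
    -- dichotomy: every root lies in U or is orthogonal to all of B
    have dich : ∀ α ∈ Δ, α ∈ U ∨ ∀ β ∈ B, ⟪β, α⟫_ℝ = 0 := by
      intro α hα
      by_cases h : ∀ β ∈ B, ⟪β, α⟫_ℝ = 0
      · exact Or.inr h
      push_neg at h
      obtain ⟨β, hβB, hβα⟩ := h
      rcases (hBmem β).1 hβB with ⟨hβΔ, hβH⟩
      left
      by_cases hαB : α ∈ B
      · exact Submodule.subset_span hαB
      have hαH : ⟪α, H⟫_ℝ = 0 := by
        by_contra hne
        exact hαB ((hBmem α).2 ⟨hα, hne⟩)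
      set c : ℝ := 2 * ⟪β, α⟫_ℝ / ⟪α, α⟫_ℝ with hcdef
      have hαα : ⟪α, α⟫_ℝ ≠ 0 := by
        simpa [inner_self_eq_zero] using hrs.ne_zero α hα
      have hc : c ≠ 0 := div_ne_zero (mul_ne_zero two_ne_zero hβα) hαα
      have hγΔ : β - c • α ∈ Δ := hrs.reflect_mem α hα β hβΔ
      have hγH : ⟪β - c • α, H⟫_ℝ ≠ 0 := by
        rw [inner_sub_left, real_inner_smul_left, hαH]
        simpa using hβH
      have hγB : β - c • α ∈ B := (hBmem _).2 ⟨hγΔ, hγH⟩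
      have hcα : c • α ∈ U := by
        have := Submodule.sub_mem U (Submodule.subset_span hβB)
          (Submodule.subset_span hγB)
        simpa using this
      have := Submodule.smul_mem U c⁻¹ hcα
      rwa [smul_smul, inv_mul_cancel₀ hc, one_smul] at this
    -- there is a root outside U
    have hout : ∃ α ∈ Δ, α ∉ U := by
      by_contra hall
      push_neg at hall
      apply hX
      apply zero_of_orth
      intro α hα
      exact inner_right_eq_zero_of_span (B : Set E) X hBX α (hall α hα)
    obtain ⟨α₀, hα₀Δ, hα₀U⟩ := hout
    obtain ⟨β₀, hβ₀B⟩ := hBne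
    -- the decomposition
    refine hind ⟨Δ.filter (fun x => x ∈ U), Δ.filter (fun x => x ∉ U), ?_, ?_, ?_, ?_⟩
    · exact ⟨β₀, Finset.mem_filter.2 ⟨((hBmem β₀).1 hβ₀B).1, Submodule.subset_span hβ₀B⟩⟩
    · exact ⟨α₀, Finset.mem_filter.2 ⟨hα₀Δ, hα₀U⟩⟩
    · ext x
      simp only [Set.mem_union, Finset.coe_filter, Set.mem_setOf_eq, Finset.mem_coe]
      tauto
    · intro a ha b hb
      rw [Finset.mem_filter] at ha hb
      have hborth : ∀ β ∈ B, ⟪β, b⟫_ℝ = 0 := by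
        rcases dich b hb.1 with h | h
        · exact absurd h hb.2
        · exact h
      have : ⟪a, b⟫_ℝ = 0 :=
        inner_right_eq_zero_of_span (B : Set E) b hborth a ha.2
      exact this
  obtain ⟨α, hαΔ, hαX, hαH⟩ := key
  constructor
  · intro heq
    have : α ∈ ({α ∈ (Δ : Set E) | ⟪α, X⟫_ℝ = 0} ∪ {α ∈ (Δ : Set E) | ⟪α, H⟫_ℝ = 0}) := by
      rw [← heq]; exact hαΔ
    rcases this with h | h
    · exact hαX h.2
    · exact hαH h.2
  · exact ⟨α, hαΔ, hαX, hαH⟩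
end

section
/- Let Δ be an indecomposable (irreducible) root system in a finite-dimensional real inner product space E, and let Δ⁺ ⊆ Δ be a positive system. Then there is at most one root β ∈ Δ⁺ with the property that β + α is not a root for every α ∈ Δ⁺; consequently, if β ∈ Δ⁺ satisfies this property, then β is the highest root of Δ⁺. -/
open InnerProductSpace

/-- A positive system in a root system: for each root exactly one of `α`, `-α` is
positive, and a sum of positive roots which is a root is positive. -/
structure IsPositiveSystem {E : Type*} [NormedAddCommGroup E] [InnerProductSpace ℝ E]
    (Δ Δp : Finset E) : Prop where
  subset : Δp ⊆ Δ
  exactly_one : ∀ α ∈ Δ, Xor' (α ∈ Δp) (-α ∈ Δp)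
  add_mem : ∀ α ∈ Δp, ∀ β ∈ Δp, α + β ∈ Δ → α + β ∈ Δp

/-- The set of linear combinations with nonnegative coefficients of elements of `Φ`. -/
def NonnegSpan {E : Type*} [NormedAddCommGroup E] [InnerProductSpace ℝ E]
    (Φ : Finset E) : Set E :=
  {x | ∃ c : E → ℝ, (∀ π ∈ Φ, 0 ≤ c π) ∧ x = ∑ π ∈ Φ, c π • π}

/-- `β` is the highest root of the positive system `Δp` with simple roots `Φ`:
`β` is positive and `β - α` is a nonnegative combination of simple roots for
every positive root `α`. -/
def IsHighestRoot {E : Type*} [NormedAddCommGroup E] [InnerProductSpace ℝ E]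
    (Δp Φ : Finset E) (β : E) : Prop :=
  β ∈ Δp ∧ ∀ α ∈ Δp, β - α ∈ NonnegSpan Φ

section Helpers

variable {E : Type*} [NormedAddCommGroup E] [InnerProductSpace ℝ E] {Δ : Finset E}

lemma rs_inner_self_pos (hrs : IsRootSystem Δ) {α : E} (hα : α ∈ Δ) : 0 < ⟪α, α⟫_ℝ :=
  lt_of_le_of_ne real_inner_self_nonneg
    (fun h => hrs.ne_zero α hα (inner_self_eq_zero.mp h.symm))

lemma rs_neg_mem (hrs : IsRootSystem Δ) {α : E} (hα : α ∈ Δ) : -α ∈ Δ := by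
  have h := hrs.reflect_mem α hα α hα
  have hne : ⟪α, α⟫_ℝ ≠ 0 := (rs_inner_self_pos hrs hα).ne'
  have h2 : 2 * ⟪α, α⟫_ℝ / ⟪α, α⟫_ℝ = 2 := by field_simp
  rw [h2] at h
  have h3 : α - (2 : ℝ) • α = -α := by module
  rwa [h3] at h

lemma rs_lemA (hrs : IsRootSystem Δ) {α β : E} (hα : α ∈ Δ) (hβ : β ∈ Δ)
    (hip : 0 < ⟪α, β⟫_ℝ) (hne : α ≠ β) : α - β ∈ Δ := by
  obtain ⟨m, hm⟩ := hrs.integral β hβ α hα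
  obtain ⟨n, hn⟩ := hrs.integral α hα β hβ
  have hββ := rs_inner_self_pos hrs hβ
  have hαα := rs_inner_self_pos hrs hα
  have hcomm : ⟪β, α⟫_ℝ = ⟪α, β⟫_ℝ := real_inner_comm α β
  have hm1 : 1 ≤ m := by
    have : (0 : ℝ) < m := by rw [← hm]; positivity
    exact_mod_cast this
  have hn1 : 1 ≤ n := by
    have : (0 : ℝ) < n := by rw [← hn, hcomm]; positivity
    exact_mod_cast this
  rcases eq_or_lt_of_le hm1 with hm2 | hm2
  · have h1 : 2 * ⟪α, β⟫_ℝ / ⟪β, β⟫_ℝ = 1 := by rw [hm, ← hm2]; norm_num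
    have := hrs.reflect_mem β hβ α hα
    rwa [h1, one_smul] at this
  · rcases eq_or_lt_of_le hn1 with hn2 | hn2
    · have h1 : 2 * ⟪β, α⟫_ℝ / ⟪α, α⟫_ℝ = 1 := by rw [hn, ← hn2]; norm_num
      have := hrs.reflect_mem α hα β hβ
      rw [h1, one_smul] at this
      have := rs_neg_mem hrs this
      rwa [neg_sub] at this
    · exfalso
      have hm3 : (2 : ℝ) ≤ 2 * ⟪α, β⟫_ℝ / ⟪β, β⟫_ℝ := by
        rw [hm]; exact_mod_cast hm2
      have hn3 : (2 : ℝ) ≤ 2 * ⟪β, α⟫_ℝ / ⟪α, α⟫_ℝ := by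
        rw [hn]; exact_mod_cast hn2
      have h4 : ⟪β, β⟫_ℝ ≤ ⟪α, β⟫_ℝ := by
        rw [le_div_iff₀ hββ] at hm3
        nlinarith
      have h5 : ⟪α, α⟫_ℝ ≤ ⟪α, β⟫_ℝ := by
        rw [le_div_iff₀ hαα] at hn3
        nlinarith
      have h6 : ⟪α - β, α - β⟫_ℝ ≤ 0 := by
        rw [inner_sub_left, inner_sub_right, inner_sub_right]
        nlinarith [hcomm]
      have h7 : α - β = 0 := inner_self_eq_zero.mp (le_antisymm h6 real_inner_self_nonneg)
      exact hne (sub_eq_zero.mp h7)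

end Helpers

lemma or_of_xor {a b : Prop} (h : Xor' a b) : a ∨ b :=
  h.elim (fun h => Or.inl h.1) (fun h => Or.inr h.1)

theorem unique_root_with_no_root_sum_is_highest
    {E : Type*} [NormedAddCommGroup E] [InnerProductSpace ℝ E] [FiniteDimensional ℝ E]
    (Δ Δp Φ : Finset E) (hrs : IsRootSystem Δ) (hind : IsIndecomposable Δ)
    (hpos : IsPositiveSystem Δ Δp)
    -- `Φ` is the set of simple roots of `Δp`:
    (hΦsub : Φ ⊆ Δp)
    (hΦli : LinearIndependent ℝ (fun x : (Φ : Set E) => (x : E)))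
    (hΦgen : ∀ α ∈ Δp, α ∈ NonnegSpan Φ) :
    (∀ β ∈ Δp, ∀ γ ∈ Δp,
        (∀ α ∈ Δp, β + α ∉ Δ) → (∀ α ∈ Δp, γ + α ∉ Δ) → β = γ) ∧
    (∀ β ∈ Δp, (∀ α ∈ Δp, β + α ∉ Δ) → IsHighestRoot Δp Φ β) := by
  classical
  -- Φ spans E
  have hmemspan : ∀ x ∈ NonnegSpan Φ, x ∈ Submodule.span ℝ (Φ : Set E) := by
    rintro x ⟨c, _, rfl⟩
    exact Submodule.sum_mem _ fun π hπ =>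
      Submodule.smul_mem _ _ (Submodule.subset_span hπ)
  have hΦtop : Submodule.span ℝ (Φ : Set E) = ⊤ := by
    refine top_unique ?_
    rw [← hrs.spans]
    refine Submodule.span_le.mpr ?_
    intro δ hδ
    rcases or_of_xor (hpos.exactly_one δ hδ) with h | h
    · exact hmemspan δ (hΦgen δ h)
    · have := hmemspan _ (hΦgen _ h)
      simpa using Submodule.neg_mem _ this
  let b : Module.Basis ↥(Φ : Set E) ℝ E := Module.Basis.mk hΦli
    (by rw [Subtype.range_coe]; exact hΦtop.ge)
  have hb : ∀ i : ↥(Φ : Set E), b i = (i : E) := fun i => Module.Basis.mk_apply _ _ i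
  -- conversion between sums over Φ and over the subtype
  have hsum_coe : ∀ c : E → ℝ, ∑ i : ↥(Φ : Set E), c ↑i • b i = ∑ π ∈ Φ, c π • π := by
    intro c
    simp only [hb]
    exact Finset.sum_coe_sort Φ (fun π => c π • π)
  have repr_sum : ∀ (c : E → ℝ) (i : ↥(Φ : Set E)),
      b.repr (∑ π ∈ Φ, c π • π) i = c ↑i := by
    intro c i
    rw [← hsum_coe]
    exact congrFun (b.repr_sum_self (fun k => c ↑k)) i
  have sum_repr : ∀ x : E, ∑ i : ↥(Φ : Set E), b.repr x i • (i : E) = x := by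
    intro x
    have := b.sum_repr x
    simpa only [hb] using this
  have nn_iff : ∀ x : E, x ∈ NonnegSpan Φ ↔ ∀ i : ↥(Φ : Set E), 0 ≤ b.repr x i := by
    intro x
    constructor
    · rintro ⟨c, hc, rfl⟩ i
      rw [repr_sum]
      exact hc _ i.2
    · intro h
      refine ⟨fun π => if hπ : π ∈ Φ then b.repr x ⟨π, hπ⟩ else 0, ?_, ?_⟩
      · intro π hπ
        dsimp only
        rw [dif_pos hπ]
        exact h _
      · rw [← hsum_coe]
        have : ∀ i : ↥(Φ : Set E),
            (if hπ : (i : E) ∈ Φ then b.repr x ⟨(i : E), hπ⟩ else 0) = b.repr x i := by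
          intro i
          rw [dif_pos (by exact_mod_cast i.2)]
        calc x = ∑ i : ↥(Φ : Set E), b.repr x i • b i := (b.sum_repr x).symm
          _ = _ := Finset.sum_congr rfl fun i _ => by rw [this i]
  have crd_nonneg : ∀ δ ∈ Δp, ∀ i : ↥(Φ : Set E), 0 ≤ b.repr δ i :=
    fun δ hδ => (nn_iff δ).mp (hΦgen δ hδ)
  have repr_basis : ∀ i k : ↥(Φ : Set E), b.repr (i : E) k = if i = k then 1 else 0 := by
    intro i k
    rw [← hb i, b.repr_self_apply]
  have mem_Φ : ∀ i : ↥(Φ : Set E), (i : E) ∈ Φ := fun i => by exact_mod_cast i.2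
  -- the height function
  set ht : E → ℝ := fun x => ∑ i : ↥(Φ : Set E), b.repr x i with hht
  have ht_add : ∀ x y, ht (x + y) = ht x + ht y := by
    intro x y
    simp [hht, map_add, Finsupp.add_apply, Finset.sum_add_distrib]
  have ht_sub : ∀ x y, ht (x - y) = ht x - ht y := by
    intro x y
    simp [hht, map_sub, Finsupp.sub_apply, Finset.sum_sub_distrib]
  have ht_simple : ∀ i : ↥(Φ : Set E), ht (i : E) = 1 := by
    intro i
    show (∑ k : ↥(Φ : Set E), b.repr (i : E) k) = 1
    rw [Finset.sum_congr rfl fun k _ => repr_basis i k, Finset.sum_ite_eq]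
    simp
  have ex_ne : ∀ δ ∈ Δ, ∃ i : ↥(Φ : Set E), b.repr δ i ≠ 0 := by
    intro δ hδ
    by_contra hno
    push_neg at hno
    apply hrs.ne_zero δ hδ
    rw [← sum_repr δ]
    exact Finset.sum_eq_zero fun i _ => by rw [hno i, zero_smul]
  have ht_pos : ∀ δ ∈ Δp, 0 < ht δ := by
    intro δ hδ
    obtain ⟨i, hi⟩ := ex_ne δ (hpos.subset hδ)
    exact Finset.sum_pos' (fun k _ => crd_nonneg δ hδ k)
      ⟨i, Finset.mem_univ i, lt_of_le_of_ne (crd_nonneg δ hδ i) (Ne.symm hi)⟩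
  -- distinct simple roots form obtuse angles
  have obtuse : ∀ i j : ↥(Φ : Set E), i ≠ j → ⟪(i : E), (j : E)⟫_ℝ ≤ 0 := by
    intro i j hij
    by_contra h
    push_neg at h
    have hiΔ : (i : E) ∈ Δ := hpos.subset (hΦsub (mem_Φ i))
    have hjΔ : (j : E) ∈ Δ := hpos.subset (hΦsub (mem_Φ j))
    have hneq : (i : E) ≠ (j : E) := fun h' => hij (Subtype.coe_injective h')
    have hd : (i : E) - (j : E) ∈ Δ := rs_lemA hrs hiΔ hjΔ h hneq
    rcases or_of_xor (hpos.exactly_one _ hd) with hp | hp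
    · have := crd_nonneg _ hp j
      rw [map_sub, Finsupp.sub_apply, repr_basis, repr_basis, if_neg hij, if_pos rfl] at this
      linarith
    · rw [neg_sub] at hp
      have := crd_nonneg _ hp i
      rw [map_sub, Finsupp.sub_apply, repr_basis, repr_basis, if_neg (Ne.symm hij), if_pos rfl] at this
      linarith
  -- a root that cannot be increased pairs nonnegatively with all positive roots
  have lemB : ∀ β ∈ Δp, (∀ α ∈ Δp, β + α ∉ Δ) → ∀ α ∈ Δp, 0 ≤ ⟪β, α⟫_ℝ := by
    intro β hβ hmax α hα
    by_contra h
    push_neg at h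
    have hβΔ : β ∈ Δ := hpos.subset hβ
    have hαΔ : α ∈ Δ := hpos.subset hα
    have hnαΔ : -α ∈ Δ := rs_neg_mem hrs hαΔ
    have h2 : 0 < ⟪β, -α⟫_ℝ := by rw [inner_neg_right]; linarith
    have hne : β ≠ -α := by
      intro h'
      rcases hpos.exactly_one α hαΔ with ⟨_, hn⟩ | ⟨_, hn⟩
      · exact hn (h' ▸ hβ)
      · exact hn hα
    have := rs_lemA hrs hβΔ hnαΔ h2 hne
    rw [sub_neg_eq_add] at this
    exact hmax α hα this
  -- inner products via coordinates
  have inner_repr : ∀ x y : E, ⟪x, y⟫_ℝ =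
      ∑ i : ↥(Φ : Set E), ∑ j : ↥(Φ : Set E),
        b.repr x i * (b.repr y j * ⟪(i : E), (j : E)⟫_ℝ) := by
    intro x y
    conv_lhs => rw [← sum_repr x, ← sum_repr y]
    rw [sum_inner]
    refine Finset.sum_congr rfl fun i _ => ?_
    rw [real_inner_smul_left, inner_sum, Finset.mul_sum]
    refine Finset.sum_congr rfl fun j _ => ?_
    rw [real_inner_smul_right]
  have orth_pair : ∀ (P : ↥(Φ : Set E) → Prop),
      (∀ i j, P i → ¬ P j → ⟪(i : E), (j : E)⟫_ℝ = 0) →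
      ∀ x y : E, (∀ i, ¬ P i → b.repr x i = 0) → (∀ i, P i → b.repr y i = 0) →
      ⟪x, y⟫_ℝ = 0 := by
    intro P horth x y hx hy
    rw [inner_repr]
    refine Finset.sum_eq_zero fun i _ => Finset.sum_eq_zero fun j _ => ?_
    by_cases hi : P i
    · by_cases hj : P j
      · rw [hy j hj, zero_mul, mul_zero]
      · rw [horth i j hi hj, mul_zero, mul_zero]
    · rw [hx i hi, zero_mul]
  -- key induction: a positive root cannot have support in two orthogonal parts
  have key : ∀ (n : ℕ) (P : ↥(Φ : Set E) → Prop),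
      (∀ i j, P i → ¬ P j → ⟪(i : E), (j : E)⟫_ℝ = 0) →
      ∀ δ ∈ Δp, (Δp.filter (fun x => ht x < ht δ)).card ≤ n →
      (∃ i, P i ∧ 0 < b.repr δ i) → (∃ j, ¬ P j ∧ 0 < b.repr δ j) → False := by
    intro n
    induction n using Nat.strong_induction_on with
    | _ n IH =>
    intro P horth δ hδp hcard hex1 hex2
    have hδΔ : δ ∈ Δ := hpos.subset hδp
    have core : ∀ Q : ↥(Φ : Set E) → Prop,
        (∀ i j, Q i → ¬ Q j → ⟪(i : E), (j : E)⟫_ℝ = 0) →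
        (∃ j, ¬ Q j ∧ 0 < b.repr δ j) →
        0 < ⟪δ, ∑ k ∈ Finset.univ.filter Q, b.repr δ k • (k : E)⟫_ℝ → False := by
      rintro Q hQ ⟨j', hQj', hcj'⟩ hpos1
      -- find a simple root i' in Q with positive coefficient and positive pairing
      have hexp : ⟪δ, ∑ k ∈ Finset.univ.filter Q, b.repr δ k • (k : E)⟫_ℝ =
          ∑ k ∈ Finset.univ.filter Q, b.repr δ k * ⟪δ, (k : E)⟫_ℝ := by
        rw [inner_sum]
        exact Finset.sum_congr rfl fun k _ => real_inner_smul_right _ _ _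
      rw [hexp] at hpos1
      have hterm : ∃ i' ∈ Finset.univ.filter Q, 0 < b.repr δ i' * ⟪δ, (i' : E)⟫_ℝ := by
        by_contra hno
        push_neg at hno
        exact absurd (Finset.sum_nonpos hno) (not_le.mpr hpos1)
      obtain ⟨i', hi'mem, hprod⟩ := hterm
      have hQi' : Q i' := (Finset.mem_filter.mp hi'mem).2
      have hci' : 0 ≤ b.repr δ i' := crd_nonneg δ hδp i'
      have hip : 0 < ⟪δ, (i' : E)⟫_ℝ := by
        rcases le_or_gt ⟪δ, (i' : E)⟫_ℝ 0 with h | h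
        · nlinarith
        · exact h
      have hπΔp : (i' : E) ∈ Δp := hΦsub (mem_Φ i')
      have hπΔ : (i' : E) ∈ Δ := hpos.subset hπΔp
      have hij' : i' ≠ j' := fun h => hQj' (h ▸ hQi')
      have hδne : δ ≠ (i' : E) := by
        intro h
        rw [h, repr_basis, if_neg hij'] at hcj'
        exact lt_irrefl 0 hcj'
      have hd : δ - (i' : E) ∈ Δ := rs_lemA hrs hδΔ hπΔ hip hδne
      have hdp : δ - (i' : E) ∈ Δp := by
        rcases or_of_xor (hpos.exactly_one _ hd) with h1 | h1
        · exact h1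
        · exfalso
          rw [neg_sub] at h1
          have := crd_nonneg _ h1 j'
          rw [map_sub, Finsupp.sub_apply, repr_basis, if_neg hij'] at this
          linarith
      have hrepr_d : ∀ k, b.repr (δ - (i' : E)) k =
          b.repr δ k - (if i' = k then 1 else 0) := by
        intro k
        rw [map_sub, Finsupp.sub_apply, repr_basis]
      have hhtd : ht (δ - (i' : E)) = ht δ - 1 := by
        rw [ht_sub, ht_simple]
      have hlt : ht (δ - (i' : E)) < ht δ := by rw [hhtd]; linarith
      set m := (Δp.filter (fun x => ht x < ht (δ - (i' : E)))).card with hm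
      have hmem : (δ - (i' : E)) ∈ Δp.filter (fun x => ht x < ht δ) :=
        Finset.mem_filter.mpr ⟨hdp, hlt⟩
      have hmn : m < n := by
        have hsub : Δp.filter (fun x => ht x < ht (δ - (i' : E))) ⊆
            (Δp.filter (fun x => ht x < ht δ)).erase (δ - (i' : E)) := by
          intro x hx
          rw [Finset.mem_filter] at hx
          refine Finset.mem_erase.mpr ⟨?_, Finset.mem_filter.mpr ⟨hx.1, lt_trans hx.2 hlt⟩⟩
          intro h
          rw [h] at hx
          exact lt_irrefl _ hx.2
        have h1 := Finset.card_le_card hsub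
        have h2 := Finset.card_erase_of_mem hmem
        have h3 : 0 < (Δp.filter (fun x => ht x < ht δ)).card :=
          Finset.card_pos.mpr ⟨_, hmem⟩
        omega
      by_cases hQsupp : ∃ k, Q k ∧ 0 < b.repr (δ - (i' : E)) k
      · refine IH m hmn Q hQ _ hdp le_rfl hQsupp ⟨j', hQj', ?_⟩
        rw [hrepr_d, if_neg hij']
        linarith
      · push_neg at hQsupp
        have hQ0 : ∀ k, Q k → b.repr (δ - (i' : E)) k = 0 := fun k hk =>
          le_antisymm (hQsupp k hk) (crd_nonneg _ hdp k)
        have horthπ : ⟪(i' : E), δ - (i' : E)⟫_ℝ = 0 := by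
          refine orth_pair Q hQ _ _ ?_ hQ0
          intro k hk
          exact (repr_basis i' k).trans (if_neg (fun h : i' = k => hk (h ▸ hQi')))
        have hip2 : ⟪δ, δ - (i' : E)⟫_ℝ = ⟪δ - (i' : E), δ - (i' : E)⟫_ℝ := by
          have hsplitδ : δ = (i' : E) + (δ - (i' : E)) := by abel
          calc ⟪δ, δ - (i' : E)⟫_ℝ
              = ⟪(i' : E) + (δ - (i' : E)), δ - (i' : E)⟫_ℝ := by rw [← hsplitδ]
            _ = ⟪(i' : E), δ - (i' : E)⟫_ℝ + ⟪δ - (i' : E), δ - (i' : E)⟫_ℝ :=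
                inner_add_left _ _ _
            _ = ⟪δ - (i' : E), δ - (i' : E)⟫_ℝ := by rw [horthπ, zero_add]
        have hipne : ⟪δ - (i' : E), δ - (i' : E)⟫_ℝ ≠ 0 := (rs_inner_self_pos hrs hd).ne'
        have hratio : 2 * ⟪δ, δ - (i' : E)⟫_ℝ / ⟪δ - (i' : E), δ - (i' : E)⟫_ℝ = 2 := by
          rw [hip2]; field_simp
        have hrefl := hrs.reflect_mem (δ - (i' : E)) hd δ hδΔ
        rw [hratio] at hrefl
        have hrw : δ - (2 : ℝ) • (δ - (i' : E)) = (i' : E) - (δ - (i' : E)) := by module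
        rw [hrw] at hrefl
        rcases or_of_xor (hpos.exactly_one _ hrefl) with h1 | h1
        · have := crd_nonneg _ h1 j'
          rw [map_sub, Finsupp.sub_apply, repr_basis, if_neg hij', hrepr_d, if_neg hij'] at this
          linarith
        · rw [neg_sub] at h1
          have := crd_nonneg _ h1 i'
          rw [map_sub, Finsupp.sub_apply, hQ0 i' hQi', repr_basis, if_pos rfl] at this
          linarith
    have hsplit : (∑ k ∈ Finset.univ.filter P, b.repr δ k • (k : E)) +
        (∑ k ∈ Finset.univ.filter (fun k => ¬ P k), b.repr δ k • (k : E)) = δ := by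
      rw [Finset.sum_filter_add_sum_filter_not]
      exact sum_repr δ
    have hself : 0 < ⟪δ, δ⟫_ℝ := rs_inner_self_pos hrs hδΔ
    have hsum2 : ⟪δ, (∑ k ∈ Finset.univ.filter P, b.repr δ k • (k : E))⟫_ℝ +
        ⟪δ, (∑ k ∈ Finset.univ.filter (fun k => ¬ P k), b.repr δ k • (k : E))⟫_ℝ
        = ⟪δ, δ⟫_ℝ := by
      rw [← inner_add_right, hsplit]
    by_cases h1 : 0 < ⟪δ, (∑ k ∈ Finset.univ.filter P, b.repr δ k • (k : E))⟫_ℝ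
    · exact core P horth hex2 h1
    · have h2 : 0 < ⟪δ,
          (∑ k ∈ Finset.univ.filter (fun k => ¬ P k), b.repr δ k • (k : E))⟫_ℝ := by
        push_neg at h1; linarith
      refine core (fun k => ¬ P k) ?_ ?_ ?_
      · intro i j hi hj
        rw [real_inner_comm]
        exact horth j i (not_not.mp hj) hi
      · obtain ⟨i, hPi, hci⟩ := hex1
        exact ⟨i, not_not.mpr hPi, hci⟩
      · convert h2 using 3
        ext k
        simp
  -- every root with no root sum has all coordinates positive
  have maxpos : ∀ β ∈ Δp, (∀ α ∈ Δp, β + α ∉ Δ) → ∀ i : ↥(Φ : Set E), 0 < b.repr β i := by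
    intro β hβ hmax
    by_contra hno
    push_neg at hno
    obtain ⟨j, hj⟩ := hno
    have hj0 : b.repr β j = 0 := le_antisymm hj (crd_nonneg β hβ j)
    set P : ↥(Φ : Set E) → Prop := fun i => 0 < b.repr β i with hP
    have horth : ∀ i k, P i → ¬ P k → ⟪(i : E), (k : E)⟫_ℝ = 0 := by
      intro i k hPi hPk
      have hk0 : b.repr β k = 0 := le_antisymm (not_lt.mp hPk) (crd_nonneg β hβ k)
      have hik : i ≠ k := fun h => hPk (h ▸ hPi)
      have hexp : ⟪β, (k : E)⟫_ℝ = ∑ i' : ↥(Φ : Set E), b.repr β i' * ⟪(i' : E), (k : E)⟫_ℝ := by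
        conv_lhs => rw [← sum_repr β]
        rw [sum_inner]
        exact Finset.sum_congr rfl fun i' _ => real_inner_smul_left _ _ _
      have hterms : ∀ i' ∈ Finset.univ, b.repr β i' * ⟪(i' : E), (k : E)⟫_ℝ ≤ 0 := by
        intro i' _
        by_cases h : i' = k
        · rw [h, hk0, zero_mul]
        · exact mul_nonpos_of_nonneg_of_nonpos (crd_nonneg β hβ i') (obtuse i' k h)
      have hge : 0 ≤ ⟪β, (k : E)⟫_ℝ := lemB β hβ hmax _ (hΦsub (mem_Φ k))
      have hsum0 : ∑ i' : ↥(Φ : Set E), b.repr β i' * ⟪(i' : E), (k : E)⟫_ℝ = 0 :=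
        le_antisymm (Finset.sum_nonpos hterms) (hexp ▸ hge)
      have hzero := (Finset.sum_eq_zero_iff_of_nonpos hterms).mp hsum0 i (Finset.mem_univ i)
      rcases mul_eq_zero.mp hzero with h | h
      · exact absurd h hPi.ne'
      · exact h
    -- every root is supported in P or in its complement
    have hsplitroots : ∀ δ ∈ Δ,
        (∀ k, ¬ P k → b.repr δ k = 0) ∨ (∀ k, P k → b.repr δ k = 0) := by
      have main : ∀ δ' ∈ Δp,
          (∀ k, ¬ P k → b.repr δ' k = 0) ∨ (∀ k, P k → b.repr δ' k = 0) := by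
        intro δ' hδ'
        by_contra hc
        push_neg at hc
        obtain ⟨⟨k1, hk1, hne1⟩, ⟨k2, hk2, hne2⟩⟩ := hc
        exact key _ P horth δ' hδ' le_rfl
          ⟨k2, hk2, lt_of_le_of_ne (crd_nonneg _ hδ' k2) (Ne.symm hne2)⟩
          ⟨k1, hk1, lt_of_le_of_ne (crd_nonneg _ hδ' k1) (Ne.symm hne1)⟩
      intro δ hδ
      rcases or_of_xor (hpos.exactly_one δ hδ) with h | h
      · exact main δ h
      · rcases main (-δ) h with h1 | h1
        · left
          intro k hk
          have := h1 k hk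
          rw [map_neg, Finsupp.neg_apply, neg_eq_zero] at this
          exact this
        · right
          intro k hk
          have := h1 k hk
          rw [map_neg, Finsupp.neg_apply, neg_eq_zero] at this
          exact this
    -- contradiction with indecomposability
    apply hind
    set S : Finset E := Δ.filter (fun x => ∀ k, ¬ P k → b.repr x k = 0) with hS
    set T : Finset E := Δ \ S with hT
    refine ⟨S, T, ⟨β, ?_⟩, ⟨(j : E), ?_⟩, ?_, ?_⟩
    · refine Finset.mem_filter.mpr ⟨hpos.subset hβ, ?_⟩
      intro k hk
      exact le_antisymm (not_lt.mp hk) (crd_nonneg β hβ k)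
    · refine Finset.mem_sdiff.mpr ⟨hpos.subset (hΦsub (mem_Φ j)), ?_⟩
      intro hjS
      have := (Finset.mem_filter.mp hjS).2 j (by rw [hP]; simpa using hj)
      rw [repr_basis, if_pos rfl] at this
      exact one_ne_zero this
    · ext x
      simp only [Finset.coe_filter, Finset.coe_sdiff, Set.mem_union, Set.mem_setOf_eq,
        Set.mem_diff, Finset.mem_coe, hT, hS, Finset.mem_filter]
      tauto
    · intro x hx y hy
      have hxS := Finset.mem_filter.mp hx
      have hyT := Finset.mem_sdiff.mp hy
      have hy2 : ∀ k, P k → b.repr y k = 0 := by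
        rcases hsplitroots y hyT.1 with h | h
        · exact absurd (Finset.mem_filter.mpr ⟨hyT.1, h⟩) hyT.2
        · exact h
      exact orth_pair P horth x y hxS.2 hy2
  -- Part 1: uniqueness
  have part1 : ∀ β ∈ Δp, ∀ γ ∈ Δp,
      (∀ α ∈ Δp, β + α ∉ Δ) → (∀ α ∈ Δp, γ + α ∉ Δ) → β = γ := by
    intro β hβ γ hγ hmβ hmγ
    by_contra hne
    have hexp : ∀ x : E, ⟪β, x⟫_ℝ = ∑ i : ↥(Φ : Set E), b.repr x i * ⟪β, (i : E)⟫_ℝ := by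
      intro x
      conv_lhs => rw [← sum_repr x]
      rw [inner_sum]
      exact Finset.sum_congr rfl fun i _ => real_inner_smul_right _ _ _
    have hββ : 0 < ⟪β, β⟫_ℝ := rs_inner_self_pos hrs (hpos.subset hβ)
    have hex : ∃ i₀ : ↥(Φ : Set E), 0 < b.repr β i₀ * ⟪β, (i₀ : E)⟫_ℝ := by
      by_contra hno
      push_neg at hno
      have := Finset.sum_nonpos (fun i (_ : i ∈ Finset.univ) => hno i)
      rw [← hexp β] at this
      linarith
    obtain ⟨i₀, hi₀⟩ := hex
    have hip₀ : 0 < ⟪β, (i₀ : E)⟫_ℝ := by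
      rcases le_or_gt ⟪β, (i₀ : E)⟫_ℝ 0 with h | h
      · nlinarith [crd_nonneg β hβ i₀]
      · exact h
    have hbg : 0 < ⟪β, γ⟫_ℝ := by
      rw [hexp γ]
      refine Finset.sum_pos' (fun i _ => mul_nonneg (crd_nonneg γ hγ i)
        (lemB β hβ hmβ _ (hΦsub (mem_Φ i)))) ?_
      exact ⟨i₀, Finset.mem_univ i₀, mul_pos (maxpos γ hγ hmγ i₀) hip₀⟩
    have hd : β - γ ∈ Δ := rs_lemA hrs (hpos.subset hβ) (hpos.subset hγ) hbg hne
    rcases or_of_xor (hpos.exactly_one _ hd) with h | h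
    · exact hmγ _ h (by rw [show γ + (β - γ) = β by abel]; exact hpos.subset hβ)
    · rw [neg_sub] at h
      exact hmβ _ h (by rw [show β + (γ - β) = γ by abel]; exact hpos.subset hγ)
  refine ⟨part1, ?_⟩
  -- Part 2: highest root
  intro β hβ hmax
  refine ⟨hβ, ?_⟩
  intro α hα
  set Sset : Finset E := Δp.filter (fun x => x - α ∈ NonnegSpan Φ) with hSset
  have hαS : α ∈ Sset := by
    refine Finset.mem_filter.mpr ⟨hα, ?_⟩
    rw [sub_self]
    exact (nn_iff 0).mpr (by simp)
  obtain ⟨γ, hγS, hγmax⟩ := Finset.exists_max_image Sset ht ⟨α, hαS⟩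
  have hγp : γ ∈ Δp := (Finset.mem_filter.mp hγS).1
  have hγnn : γ - α ∈ NonnegSpan Φ := (Finset.mem_filter.mp hγS).2
  have hγM : ∀ δ ∈ Δp, γ + δ ∉ Δ := by
    intro δ hδ hmem
    have h1 : γ + δ ∈ Δp := hpos.add_mem γ hγp δ hδ hmem
    have h2 : γ + δ ∈ Sset := by
      refine Finset.mem_filter.mpr ⟨h1, ?_⟩
      refine (nn_iff _).mpr fun i => ?_
      have heq : γ + δ - α = (γ - α) + δ := by abel
      rw [heq, map_add, Finsupp.add_apply]
      exact add_nonneg ((nn_iff _).mp hγnn i) (crd_nonneg δ hδ i)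
    have h3 := hγmax _ h2
    rw [ht_add] at h3
    have := ht_pos δ hδ
    linarith
  have hγβ : γ = β := part1 γ hγp β hβ hγM hmax
  rw [← hγβ]
  exact hγnn
end
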